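/- Normalized decay of translated kernels: assume χ_0(n) = 1/√N for all n, let ĝ : [0, λ_max] → ℝ be a kernel with ĝ(0) ≠ 0 that is d_in-times continuously differentiable on [0, λ_max], where d_in := d_G(i,n) ≥ 1 for fixed vertices i and n, and let g ∈ ℝ^N be the signal with graph Fourier coefficients ĝ(λ_ℓ). Then |(T_i g)(n)| / ‖T_i g‖_2 ≤ [ (2√N / (d_in! · |ĝ(0)|)) · (λ_max/4)^{d_in} ] · sup_{λ ∈ [0, λ_max]} |ĝ^{(d_in)}(λ)|. -/

import Mathlib

/-!
Since `(L ^ k) i n = 0` for `k < d := d_G(i, n)`, every polynomial `p` of degree `< d` satisfies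
`∑ ℓ, p(λ_ℓ) χ_ℓ(i) χ_ℓ(n) = p(L) i n = 0`. Hence `(T_i g)(n) = √N ∑ ℓ, (ĝ - p)(λ_ℓ) χ_ℓ(i) χ_ℓ(n)`,
which Cauchy–Schwarz over the orthonormal columns bounds by `√N · sup |ĝ - p|`. Interpolating `ĝ`
at the `d` Chebyshev nodes of `[0, λ_max]` makes `sup |ĝ - p| ≤ 2 (λ_max / 4) ^ d sup |ĝ⁽ᵈ⁾| / d!`.
For the denominator, Parseval gives `‖T_i g‖₂² = N ∑ ℓ, (ĝ(λ_ℓ) χ_ℓ(i))²`, and the term `ℓ = 0`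
alone is `ĝ(0)²` because `χ_0 ≡ 1 / √N` and `λ_0 = 0`.
-/

open Finset

/-- Graph Fourier transform: f̂(ℓ) = Σₙ f(n) χ_ℓ(n). -/
noncomputable def gft {N : ℕ} (χ : Fin N → Fin N → ℝ) (f : Fin N → ℝ) (l : Fin N) : ℝ :=
  ∑ n, f n * χ l n

/-- Generalized convolution: (f∗g)(n) = Σ_ℓ f̂(ℓ) ĝ(ℓ) χ_ℓ(n). -/
noncomputable def gconv {N : ℕ} (χ : Fin N → Fin N → ℝ) (f g : Fin N → ℝ) : Fin N → ℝ :=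
  fun n => ∑ l, gft χ f l * gft χ g l * χ l n

/-- Generalized translation: (T_i f)(n) = √N Σ_ℓ f̂(ℓ) χ_ℓ(i) χ_ℓ(n). -/
noncomputable def gtrans {N : ℕ} (χ : Fin N → Fin N → ℝ) (i : Fin N) (f : Fin N → ℝ) : Fin N → ℝ :=
  fun n => Real.sqrt N * ∑ l, gft χ f l * χ l i * χ l n

/-- Generalized modulation: (M_k f)(n) = √N f(n) χ_k(n). -/
noncomputable def gmod {N : ℕ} (χ : Fin N → Fin N → ℝ) (k : Fin N) (f : Fin N → ℝ) : Fin N → ℝ :=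
  fun n => Real.sqrt N * f n * χ k n

/-- The simple graph associated to the matrix L: edge between distinct m, n iff L m n ≠ 0. -/
def graphOf {N : ℕ} (L : Matrix (Fin N) (Fin N) ℝ) : SimpleGraph (Fin N) :=
  SimpleGraph.fromRel fun m n => L m n ≠ 0

/-- The signal on the graph whose graph Fourier coefficients are ĝ(λ_ℓ). -/
noncomputable def kernelSig {N : ℕ} (χ : Fin N → Fin N → ℝ) (lam : Fin N → ℝ)
    (ghat : ℝ → ℝ) : Fin N → ℝ :=
  fun m => ∑ l, ghat (lam l) * χ l m

/-- Windowed graph Fourier atom g_{i,k} = M_k T_i g. -/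
noncomputable def wgfAtom {N : ℕ} (χ : Fin N → Fin N → ℝ) (g : Fin N → ℝ)
    (i k : Fin N) : Fin N → ℝ :=
  gmod χ k (gtrans χ i g)

section Interpolation

open Set Polynomial

theorem exists_finset_card_le_deriv_eq_zero {f : ℝ → ℝ} {a b : ℝ}
    (hf : ContinuousOn f (Icc a b)) {s : Finset ℝ} (hs : ↑s ⊆ Icc a b)
    (hzero : ∀ x ∈ s, f x = 0) :
    ∃ t : Finset ℝ, ↑t ⊆ Ioo a b ∧ s.card ≤ t.card + 1 ∧ ∀ z ∈ t, deriv f z = 0 := by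
  classical
  have hrolle : ∀ x ∈ s, ∀ y ∈ s, x < y → ∃ z ∈ Ioo x y, deriv f z = 0 := fun x hx y hy hxy =>
    exists_deriv_eq_zero hxy (hf.mono (Icc_subset_Icc (hs hx).1 (hs hy).2))
      ((hzero x hx).trans (hzero y hy).symm)
  choose! z hz hz0 using hrolle
  refine ⟨((s ×ˢ s).filter fun p => p.1 < p.2).image fun p => z p.1 p.2, ?_, ?_, ?_⟩
  · intro w hw
    obtain ⟨⟨x, y⟩, hp, rfl⟩ := Finset.mem_image.mp hw
    rw [Finset.mem_filter, Finset.mem_product] at hp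
    obtain ⟨⟨hx, hy⟩, hxy⟩ := hp
    have hzxy := hz x hx y hy hxy
    exact ⟨(hs hx).1.trans_lt hzxy.1, hzxy.2.trans_le (hs hy).2⟩
  · refine Finset.card_le_of_interleaved fun x hx y hy hxy _ => ⟨z x y, ?_, hz x hx y hy hxy⟩
    have hmem : (x, y) ∈ (s ×ˢ s).filter fun p => p.1 < p.2 :=
      Finset.mem_filter.mpr ⟨Finset.mem_product.mpr ⟨hx, hy⟩, hxy⟩
    exact Finset.mem_image_of_mem _ hmem
  · intro w hw
    obtain ⟨⟨x, y⟩, hp, rfl⟩ := Finset.mem_image.mp hw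
    rw [Finset.mem_filter, Finset.mem_product] at hp
    exact hz0 x hp.1.1 y hp.1.2 hp.2

theorem exists_iteratedDerivWithin_eq_zero {f : ℝ → ℝ} {a b : ℝ} (hab : a < b) {n : ℕ}
    (hf : ContDiffOn ℝ n f (Icc a b)) {s : Finset ℝ} (hs : ↑s ⊆ Icc a b) (hcard : n < s.card)
    (hzero : ∀ x ∈ s, f x = 0) :
    ∃ ξ ∈ Icc a b, iteratedDerivWithin n f (Icc a b) ξ = 0 := by
  have key : ∀ k ≤ n, ∃ t : Finset ℝ, ↑t ⊆ Icc a b ∧ s.card ≤ t.card + k ∧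
      ∀ z ∈ t, iteratedDerivWithin k f (Icc a b) z = 0 := by
    intro k
    induction k with
    | zero => exact fun _ => ⟨s, hs, le_rfl, by simpa using hzero⟩
    | succ k ih =>
      intro hk
      obtain ⟨t, hts, hcard, htzero⟩ := ih (by omega)
      have hcont := hf.continuousOn_iteratedDerivWithin (m := k)
        (by exact_mod_cast (by omega : k ≤ n)) (uniqueDiffOn_Icc hab)
      obtain ⟨t', ht's, hcard', ht'zero⟩ := exists_finset_card_le_deriv_eq_zero hcont hts htzero
      refine ⟨t', ht's.trans Ioo_subset_Icc_self, by omega, fun z hz => ?_⟩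
      rw [iteratedDerivWithin_succ, derivWithin_of_mem_nhds (Icc_mem_nhds (ht's hz).1 (ht's hz).2)]
      exact ht'zero z hz
  obtain ⟨t, hts, htcard, htzero⟩ := key n le_rfl
  obtain ⟨ξ, hξ⟩ := Finset.card_pos.mp (by omega : 0 < t.card)
  exact ⟨ξ, hts hξ, htzero ξ hξ⟩

theorem Polynomial.contDiff_eval (p : ℝ[X]) (n : WithTop ℕ∞) : ContDiff ℝ n fun x => p.eval x := by
  simpa using p.contDiff_aeval (𝕜 := ℝ) n

theorem Polynomial.iteratedDeriv_eval (p : ℝ[X]) (k : ℕ) :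
    iteratedDeriv k (fun x => p.eval x) = fun x => (derivative^[k] p).eval x := by
  induction k generalizing p with
  | zero => rfl
  | succ k ih =>
    have hderiv : _root_.deriv (fun x => p.eval x) = fun x => p.derivative.eval x := by
      ext x; exact p.deriv
    rw [iteratedDeriv_succ', hderiv, ih, Function.iterate_succ_apply]

theorem Polynomial.iteratedDerivWithin_eval {s : Set ℝ} (hs : UniqueDiffOn ℝ s) (p : ℝ[X])
    (k : ℕ) {x : ℝ} (hx : x ∈ s) :
    iteratedDerivWithin k (fun x => p.eval x) s x = (derivative^[k] p).eval x := by
  rw [iteratedDerivWithin_eq_iteratedDeriv hs (p.contDiff_eval k).contDiffAt hx,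
    p.iteratedDeriv_eval]

theorem Polynomial.iterate_derivative_eq_C_of_natDegree_le {R : Type*} [CommRing R] {p : R[X]}
    {d : ℕ} (hp : p.natDegree ≤ d) : derivative^[d] p = C (d.factorial * p.coeff d) := by
  rw [eq_C_of_natDegree_le_zero ((natDegree_iterate_derivative p d).trans (by omega)),
    coeff_iterate_derivative, zero_add, Nat.descFactorial_self, nsmul_eq_mul]

theorem Lagrange.iterate_derivative_add_C_mul_nodal {R ι : Type*} [CommRing R] [Nontrivial R]
    {s : Finset ι} {v : ι → R} {P : R[X]} (hP : P.degree < s.card) (K : R) :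
    derivative^[s.card] (P + C K * nodal s v) = C (s.card.factorial * K) := by
  have hnodal : (nodal s v).coeff s.card = 1 := by
    simpa [natDegree_nodal] using (nodal_monic (s := s) (v := v)).coeff_natDegree
  rw [iterate_derivative_eq_C_of_natDegree_le, coeff_add, coeff_C_mul, hnodal,
    coeff_eq_zero_of_degree_lt hP, zero_add, mul_one]
  exact natDegree_add_le_of_degree_le (natDegree_le_of_degree_le hP.le)
    ((natDegree_C_mul_le K _).trans natDegree_nodal.le)

theorem abs_sub_interpolate_le {f : ℝ → ℝ} {a b M : ℝ} (hab : a < b) {s : Finset ℝ}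
    (hs : ↑s ⊆ Icc a b) (hf : ContDiffOn ℝ s.card f (Icc a b))
    (hM : ∀ ξ ∈ Icc a b, |iteratedDerivWithin s.card f (Icc a b) ξ| ≤ M) {x : ℝ}
    (hx : x ∈ Icc a b) :
    |f x - (Lagrange.interpolate s id f).eval x| ≤ M / s.card.factorial * |∏ y ∈ s, (x - y)| := by
  set d := s.card
  set P := Lagrange.interpolate s id f
  set ω := Lagrange.nodal s id
  have hPnode : ∀ y ∈ s, P.eval y = f y := fun y hy =>
    Lagrange.eval_interpolate_at_node f (injOn_id _) hy
  have hωeval : ∀ y, ω.eval y = ∏ z ∈ s, (y - z) := fun y => Lagrange.eval_nodal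
  have hM0 : 0 ≤ M := (abs_nonneg _).trans (hM a ⟨le_rfl, hab.le⟩)
  by_cases hxs : x ∈ s
  · rw [hPnode x hxs, sub_self, abs_zero]
    positivity
  have hωx : ω.eval x ≠ 0 := Lagrange.eval_nodal_not_at_node fun y hy h => hxs (h ▸ hy)
  -- `q` interpolates `f` on `s` and additionally at `x`
  set K := (f x - P.eval x) / ω.eval x
  set q := P + C K * ω
  have hPdeg : P.degree < d := Lagrange.degree_interpolate_lt f (injOn_id _)
  have hqd : derivative^[d] q = C (d.factorial * K) :=
    Lagrange.iterate_derivative_add_C_mul_nodal hPdeg K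
  have hzero : ∀ y ∈ insert x s, f y - q.eval y = 0 := by
    intro y hy
    rcases Finset.mem_insert.mp hy with rfl | hy
    · rw [eval_add, eval_mul, eval_C, div_mul_cancel₀ _ hωx]
      ring
    · rw [eval_add, eval_mul, eval_C, hPnode y hy, hωeval, Finset.prod_eq_zero hy (sub_self y)]
      ring
  obtain ⟨ξ, hξ, hξ0⟩ := exists_iteratedDerivWithin_eq_zero hab
    (hf.sub (q.contDiff_eval _).contDiffOn) (s := insert x s)
    (Finset.coe_insert x s ▸ insert_subset hx hs)
    (by rw [Finset.card_insert_of_notMem hxs]; omega) hzero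
  have hfξ : iteratedDerivWithin d f (Icc a b) ξ = d.factorial * K := by
    have hsub := iteratedDerivWithin_sub hξ (uniqueDiffOn_Icc hab) (hf ξ hξ)
      ((q.contDiff_eval _).contDiffWithinAt (x := ξ) (s := Icc a b))
    rw [q.iteratedDerivWithin_eval (uniqueDiffOn_Icc hab) d hξ, hqd, eval_C] at hsub
    exact sub_eq_zero.mp (hsub.symm.trans hξ0)
  have hK : |K| ≤ M / d.factorial := by
    rw [le_div_iff₀ (by positivity), mul_comm, ← abs_of_pos (by positivity : (0:ℝ) < d.factorial),
      ← abs_mul, ← hfξ]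
    exact hM ξ hξ
  calc |f x - P.eval x| = |K| * |∏ y ∈ s, (x - y)| := by
        rw [← abs_mul, ← hωeval, div_mul_cancel₀ _ hωx]
    _ ≤ M / d.factorial * |∏ y ∈ s, (x - y)| := by gcongr

end Interpolation

section Chebyshev

open Set Polynomial Real

namespace Polynomial.Chebyshev

theorem injOn_cos_roots (d : ℕ) :
    InjOn (fun k : ℕ => cos ((2 * k + 1) * π / (2 * d))) (Finset.range d) :=
  (Finset.range d).nodup_map_iff_injOn.mp (roots_T_real_nodup d)

theorem T_real_eq_C_mul_prod (d : ℕ) :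
    T ℝ d = Polynomial.C (2 ^ (d - 1)) *
      ∏ k ∈ Finset.range d, (X - Polynomial.C (cos ((2 * k + 1) * π / (2 * d)))) := by
  have hcard : (T ℝ d).roots.card = (T ℝ d).natDegree := by
    rw [roots_T_real, natDegree_T, Finset.card_val, Finset.card_image_of_injOn (injOn_cos_roots d)]
    simp
  have h := C_leadingCoeff_mul_prod_multiset_X_sub_C hcard
  rw [leadingCoeff_T, roots_T_real, ← Finset.prod_eq_multiset_prod,
    Finset.prod_image (injOn_cos_roots d)] at h
  simpa using h.symm

theorem abs_prod_sub_cos_roots_le (d : ℕ) {u : ℝ} (hu : |u| ≤ 1) :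
    |∏ k ∈ Finset.range d, (u - cos ((2 * k + 1) * π / (2 * d)))| ≤ 2 / 2 ^ d := by
  have hT := congrArg (eval u) (T_real_eq_C_mul_prod d)
  simp only [eval_mul, eval_C, eval_prod, eval_sub, eval_X] at hT
  have h2 : (0 : ℝ) < 2 ^ (d - 1) := by positivity
  calc _ = |(T ℝ d).eval u| / 2 ^ (d - 1) := by
        rw [hT, abs_mul, abs_of_pos h2, mul_div_cancel_left₀ _ h2.ne']
    _ ≤ 1 / 2 ^ (d - 1) := by gcongr; exact abs_eval_T_real_le_one _ hu
    _ ≤ 2 / 2 ^ d := by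
        rw [div_le_div_iff₀ h2 (by positivity), one_mul, ← pow_succ']
        exact pow_le_pow_right₀ one_le_two (by omega)

end Polynomial.Chebyshev

/-- The roots of the Chebyshev polynomial `T_d`, moved affinely from `[-1, 1]` to `[a, b]`. -/
noncomputable def chebyshevNodes (a b : ℝ) (d : ℕ) : Finset ℝ :=
  (Finset.range d).image fun k : ℕ => (a + b) / 2 + (b - a) / 2 * cos ((2 * k + 1) * π / (2 * d))

theorem chebyshevNodes_injOn {a b : ℝ} (hab : a < b) (d : ℕ) :
    InjOn (fun k : ℕ => (a + b) / 2 + (b - a) / 2 * cos ((2 * k + 1) * π / (2 * d)))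
      (Finset.range d) := by
  intro k hk l hl h
  refine Polynomial.Chebyshev.injOn_cos_roots d hk hl ?_
  have : (b - a) / 2 ≠ 0 := by linarith
  simpa [this] using h

theorem card_chebyshevNodes {a b : ℝ} (hab : a < b) (d : ℕ) :
    (chebyshevNodes a b d).card = d := by
  rw [chebyshevNodes, Finset.card_image_of_injOn (chebyshevNodes_injOn hab d), Finset.card_range]

theorem chebyshevNodes_subset_Icc {a b : ℝ} (hab : a ≤ b) (d : ℕ) :
    ↑(chebyshevNodes a b d) ⊆ Icc a b := by
  intro y hy
  obtain ⟨k, -, rfl⟩ := Finset.mem_image.mp hy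
  have h1 := neg_one_le_cos ((2 * k + 1) * π / (2 * d))
  have h2 := cos_le_one ((2 * k + 1) * π / (2 * d))
  constructor <;> nlinarith

theorem abs_prod_sub_chebyshevNodes_le {a b x : ℝ} (hab : a < b) (d : ℕ) (hx : x ∈ Icc a b) :
    |∏ y ∈ chebyshevNodes a b d, (x - y)| ≤ 2 * ((b - a) / 4) ^ d := by
  set u := (2 * x - a - b) / (b - a)
  have hba : 0 < b - a := sub_pos.mpr hab
  have hu : |u| ≤ 1 := by
    rw [abs_le, le_div_iff₀ hba, div_le_iff₀ hba]
    constructor <;> linarith [hx.1, hx.2]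
  have hprod : ∏ y ∈ chebyshevNodes a b d, (x - y) =
      ((b - a) / 2) ^ d * ∏ k ∈ Finset.range d, (u - cos ((2 * k + 1) * π / (2 * d))) := by
    rw [chebyshevNodes, Finset.prod_image (chebyshevNodes_injOn hab d),
      show ((b - a) / 2) ^ d = ∏ _k ∈ Finset.range d, (b - a) / 2 by
        rw [Finset.prod_const, Finset.card_range], ← Finset.prod_mul_distrib]
    refine Finset.prod_congr rfl fun k _ => ?_
    simp only [u]
    field_simp
    ring
  calc _ = ((b - a) / 2) ^ d * |∏ k ∈ Finset.range d, (u - cos ((2 * k + 1) * π / (2 * d)))| := by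
        rw [hprod, abs_mul, abs_of_pos (by positivity)]
    _ ≤ ((b - a) / 2) ^ d * (2 / 2 ^ d) := by
        gcongr; exact Polynomial.Chebyshev.abs_prod_sub_cos_roots_le d hu
    _ = 2 * ((b - a) / 4) ^ d := by
        rw [show (b - a) / 4 = (b - a) / 2 / 2 by ring, div_pow ((b - a) / 2)]
        ring

theorem exists_polynomial_natDegree_lt_abs_sub_le {f : ℝ → ℝ} {a b M : ℝ} (hab : a ≤ b) {d : ℕ}
    (hd : 0 < d) (hf : ContDiffOn ℝ d f (Icc a b))
    (hM : ∀ ξ ∈ Icc a b, |iteratedDerivWithin d f (Icc a b) ξ| ≤ M) :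
    ∃ p : ℝ[X], p.natDegree < d ∧
      ∀ x ∈ Icc a b, |f x - p.eval x| ≤ 2 / d.factorial * ((b - a) / 4) ^ d * M := by
  rcases hab.eq_or_lt with rfl | hab
  · refine ⟨C (f a), by simpa using hd, fun x hx => ?_⟩
    rw [Set.Icc_self, mem_singleton_iff] at hx
    simp [hx, zero_pow hd.ne']
  set s := chebyshevNodes a b d
  have hs : s.card = d := card_chebyshevNodes hab d
  refine ⟨Lagrange.interpolate s id f, ?_, fun x hx => ?_⟩
  · rcases eq_or_ne (Lagrange.interpolate s id f) 0 with h | h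
    · rw [h, natDegree_zero]; exact hd
    rw [natDegree_lt_iff_degree_lt h, ← hs]
    exact Lagrange.degree_interpolate_lt f (injOn_id _)
  have hM0 : 0 ≤ M := (abs_nonneg _).trans (hM a ⟨le_rfl, hab.le⟩)
  rw [← hs] at hf hM
  have herr := abs_sub_interpolate_le hab (chebyshevNodes_subset_Icc hab.le d) hf hM hx
  rw [hs] at herr
  calc _ ≤ M / d.factorial * |∏ y ∈ s, (x - y)| := herr
    _ ≤ M / d.factorial * (2 * ((b - a) / 4) ^ d) := by
        gcongr; exact abs_prod_sub_chebyshevNodes_le hab d hx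
    _ = _ := by ring

end Chebyshev

section Spectral

open Polynomial Matrix

variable {ι : Type*} [Fintype ι] [DecidableEq ι] {χ : ι → ι → ℝ}

theorem sum_mul_eq_ite_of_orthonormal_rows
    (horth : ∀ l l', ∑ n, χ l n * χ l' n = if l = l' then (1 : ℝ) else 0) (m n : ι) :
    ∑ l, χ l m * χ l n = if m = n then (1 : ℝ) else 0 := by
  have hrows : Matrix.of χ * (Matrix.of χ)ᵀ = 1 := by
    ext l l'
    simpa [Matrix.mul_apply, Matrix.one_apply] using horth l l'
  have hcols : (Matrix.of χ)ᵀ * Matrix.of χ = 1 := mul_eq_one_comm.mp hrows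
  simpa [Matrix.mul_apply, Matrix.one_apply] using congrFun₂ hcols m n

theorem sum_sq_sum_mul_eq_sum_sq
    (horth : ∀ l l', ∑ n, χ l n * χ l' n = if l = l' then (1 : ℝ) else 0) (c : ι → ℝ) :
    ∑ m, (∑ l, c l * χ l m) ^ 2 = ∑ l, c l ^ 2 := by
  calc ∑ m, (∑ l, c l * χ l m) ^ 2 = ∑ l, ∑ l', c l * c l' * ∑ m, χ l m * χ l' m := by
        simp_rw [sq, sum_mul_sum, mul_sum]
        rw [sum_comm]
        refine sum_congr rfl fun l _ => ?_
        rw [sum_comm]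
        exact sum_congr rfl fun l' _ => sum_congr rfl fun m _ => by ring
    _ = ∑ l, c l ^ 2 := by simp [horth, sq]

theorem abs_sum_mul_mul_le [Nonempty ι]
    (horth : ∀ l l', ∑ n, χ l n * χ l' n = if l = l' then (1 : ℝ) else 0) {c : ι → ℝ} {ε : ℝ}
    (hc : ∀ l, |c l| ≤ ε) (m n : ι) :
    |∑ l, c l * χ l m * χ l n| ≤ ε := by
  have hε : 0 ≤ ε := (abs_nonneg _).trans (hc (Classical.arbitrary ι))
  have hcol : ∀ m, ∑ l, χ l m ^ 2 = 1 := fun m => by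
    simpa [sq] using sum_mul_eq_ite_of_orthonormal_rows horth m m
  calc |∑ l, c l * χ l m * χ l n| ≤ ∑ l, ε * (|χ l m| * |χ l n|) := by
        refine (abs_sum_le_sum_abs _ _).trans (sum_le_sum fun l _ => ?_)
        rw [abs_mul, abs_mul, mul_assoc]
        gcongr
        exact hc l
    _ ≤ ε * (√(∑ l, |χ l m| ^ 2) * √(∑ l, |χ l n| ^ 2)) := by
        rw [← mul_sum]
        gcongr
        exact Real.sum_mul_le_sqrt_mul_sqrt _ _ _
    _ = ε := by simp [sq_abs, hcol]

namespace Matrix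

theorem pow_mulVec_of_mulVec_eq_smul {R : Type*} [CommRing R] {A : Matrix ι ι R} {v : ι → R}
    {μ : R} (h : A *ᵥ v = μ • v) (k : ℕ) : (A ^ k) *ᵥ v = μ ^ k • v := by
  induction k with
  | zero => simp
  | succ k ih => rw [pow_succ', ← mulVec_mulVec, ih, mulVec_smul, h, smul_smul, pow_succ]

theorem aeval_mulVec_of_mulVec_eq_smul {R : Type*} [CommRing R] {A : Matrix ι ι R} {v : ι → R}
    {μ : R} (h : A *ᵥ v = μ • v) (p : R[X]) : aeval A p *ᵥ v = p.eval μ • v := by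
  induction p using Polynomial.induction_on' with
  | add p q hp hq => rw [map_add, add_mulVec, hp, hq, eval_add, add_smul]
  | monomial k r =>
    rw [aeval_monomial, ← Algebra.smul_def, smul_mulVec, pow_mulVec_of_mulVec_eq_smul h,
      smul_smul, eval_monomial]

theorem apply_eq_sum_of_mulVec_eq_smul
    (horth : ∀ l l', ∑ n, χ l n * χ l' n = if l = l' then (1 : ℝ) else 0) {A : Matrix ι ι ℝ}
    {c : ι → ℝ} (h : ∀ l, A *ᵥ χ l = c l • χ l) (m n : ι) :
    A m n = ∑ l, c l * χ l m * χ l n := by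
  calc A m n = ∑ q, A m q * ∑ l, χ l q * χ l n := by
        simp [sum_mul_eq_ite_of_orthonormal_rows horth]
    _ = ∑ l, (A *ᵥ χ l) m * χ l n := by
        simp_rw [mulVec, dotProduct, mul_sum, sum_mul]
        rw [sum_comm]
        exact sum_congr rfl fun l _ => sum_congr rfl fun q _ => by ring
    _ = ∑ l, c l * χ l m * χ l n := by simp [h]

end Matrix

end Spectral

section GraphOf

open Polynomial Matrix

variable {N : ℕ} {L : Matrix (Fin N) (Fin N) ℝ}

theorem exists_walk_length_le_of_pow_apply_ne_zero {k : ℕ} {m n : Fin N} (h : (L ^ k) m n ≠ 0) :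
    ∃ w : (graphOf L).Walk m n, w.length ≤ k := by
  induction k generalizing m with
  | zero =>
    obtain rfl : m = n := by
      by_contra hmn
      exact h (by simp [one_apply_ne hmn])
    exact ⟨.nil, le_rfl⟩
  | succ k ih =>
    rw [pow_succ', mul_apply] at h
    obtain ⟨q, -, hq⟩ := exists_ne_zero_of_sum_ne_zero h
    obtain ⟨w, hw⟩ := ih (right_ne_zero_of_mul hq)
    by_cases hmq : m = q
    · subst hmq
      exact ⟨w, hw.trans k.le_succ⟩
    · have hadj : (graphOf L).Adj m q := by
        rw [graphOf, SimpleGraph.fromRel_adj]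
        exact ⟨hmq, Or.inl (left_ne_zero_of_mul hq)⟩
      exact ⟨.cons hadj w, by simpa using hw⟩

theorem pow_apply_eq_zero_of_lt_dist {k : ℕ} {m n : Fin N} (hk : k < (graphOf L).dist m n) :
    (L ^ k) m n = 0 := by
  by_contra h
  obtain ⟨w, hw⟩ := exists_walk_length_le_of_pow_apply_ne_zero h
  exact (SimpleGraph.dist_le w).trans hw |>.not_gt hk

theorem aeval_apply_eq_zero_of_natDegree_lt_dist {p : ℝ[X]} {m n : Fin N}
    (hp : p.natDegree < (graphOf L).dist m n) : aeval L p m n = 0 := by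
  rw [aeval_eq_sum_range, Matrix.sum_apply]
  refine sum_eq_zero fun k hk => ?_
  rw [Matrix.smul_apply, pow_apply_eq_zero_of_lt_dist (by rw [mem_range] at hk; omega), smul_zero]

end GraphOf

section GraphFourier

open Polynomial Matrix

variable {N : ℕ} {χ : Fin N → Fin N → ℝ} {lam : Fin N → ℝ} {ghat : ℝ → ℝ}

theorem gft_kernelSig
    (horth : ∀ l l' : Fin N, ∑ n, χ l n * χ l' n = if l = l' then (1 : ℝ) else 0) (l : Fin N) :
    gft χ (kernelSig χ lam ghat) l = ghat (lam l) := by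
  simp only [gft, kernelSig, sum_mul, mul_assoc]
  rw [sum_comm]
  simp [← mul_sum, horth]

theorem gtrans_kernelSig_apply
    (horth : ∀ l l' : Fin N, ∑ n, χ l n * χ l' n = if l = l' then (1 : ℝ) else 0) (i m : Fin N) :
    gtrans χ i (kernelSig χ lam ghat) m = √N * ∑ l, ghat (lam l) * χ l i * χ l m := by
  simp only [gtrans, gft_kernelSig horth]

theorem sum_sq_gtrans_kernelSig
    (horth : ∀ l l' : Fin N, ∑ n, χ l n * χ l' n = if l = l' then (1 : ℝ) else 0) (i : Fin N) :
    ∑ m, gtrans χ i (kernelSig χ lam ghat) m ^ 2 = N * ∑ l, (ghat (lam l) * χ l i) ^ 2 := by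
  simp_rw [gtrans_kernelSig_apply horth, mul_pow √(N : ℝ), Real.sq_sqrt (Nat.cast_nonneg N),
    ← mul_sum]
  rw [sum_sq_sum_mul_eq_sum_sq horth (fun l => ghat (lam l) * χ l i)]

theorem abs_le_sqrt_sum_sq_gtrans_kernelSig
    (horth : ∀ l l' : Fin N, ∑ n, χ l n * χ l' n = if l = l' then (1 : ℝ) else 0)
    (l₀ : Fin N) (hχ0 : ∀ n, χ l₀ n = 1 / √N) (hlam0 : lam l₀ = 0) (i : Fin N) :
    |ghat 0| ≤ √(∑ m, gtrans χ i (kernelSig χ lam ghat) m ^ 2) := by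
  have hN : (0 : ℝ) < N := Nat.cast_pos.mpr (Fin.pos l₀)
  refine Real.abs_le_sqrt ?_
  rw [sum_sq_gtrans_kernelSig horth]
  calc ghat 0 ^ 2 = N * (ghat (lam l₀) * χ l₀ i) ^ 2 := by
        rw [hlam0, hχ0, mul_pow, div_pow, Real.sq_sqrt hN.le]
        field_simp
    _ ≤ N * ∑ l, (ghat (lam l) * χ l i) ^ 2 := by
        gcongr
        exact single_le_sum (f := fun l => (ghat (lam l) * χ l i) ^ 2) (fun _ _ => sq_nonneg _)
          (mem_univ l₀)

theorem abs_gtrans_kernelSig_apply_le [NeZero N]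
    (horth : ∀ l l' : Fin N, ∑ n, χ l n * χ l' n = if l = l' then (1 : ℝ) else 0)
    {L : Matrix (Fin N) (Fin N) ℝ} (heig : ∀ l, L *ᵥ χ l = lam l • χ l) {i n : Fin N}
    {p : ℝ[X]} (hp : p.natDegree < (graphOf L).dist i n) {ε : ℝ}
    (hε : ∀ l, |ghat (lam l) - p.eval (lam l)| ≤ ε) :
    |gtrans χ i (kernelSig χ lam ghat) n| ≤ √N * ε := by
  -- `p(L)` has the same eigenvectors, and its `(i, n)` entry vanishes by locality
  have hp0 : ∑ l, p.eval (lam l) * χ l i * χ l n = 0 := by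
    rw [← Matrix.apply_eq_sum_of_mulVec_eq_smul horth
      (fun l => Matrix.aeval_mulVec_of_mulVec_eq_smul (heig l) p)]
    exact aeval_apply_eq_zero_of_natDegree_lt_dist hp
  rw [gtrans_kernelSig_apply horth, abs_mul, abs_of_nonneg (Real.sqrt_nonneg _),
    ← sub_zero (∑ l, _), ← hp0, ← sum_sub_distrib]
  gcongr
  simpa only [← sub_mul] using abs_sum_mul_mul_le horth hε i n

end GraphFourier

theorem translated_kernel_normalized_decay_general
    (N : ℕ) (hN : 0 < N) (L : Matrix (Fin N) (Fin N) ℝ)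
    (χ : Fin N → Fin N → ℝ) (lam : Fin N → ℝ)
    (horth : ∀ l l' : Fin N, ∑ n, χ l n * χ l' n = if l = l' then (1 : ℝ) else 0)
    (heig : ∀ l : Fin N, L.mulVec (χ l) = lam l • χ l)
    (hχ0 : ∀ n, χ ⟨0, hN⟩ n = 1 / Real.sqrt N)
    (hlam0 : lam ⟨0, hN⟩ = 0)
    (lammax : ℝ) (hlam : ∀ l, lam l ∈ Set.Icc (0 : ℝ) lammax)
    (ghat : ℝ → ℝ) (hg0 : ghat 0 ≠ 0) (i n : Fin N)
    (hd : 1 ≤ (graphOf L).dist i n)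
    (hsmooth : ContDiffOn ℝ ((graphOf L).dist i n : ℕ∞) ghat (Set.Icc (0 : ℝ) lammax))
    (C : ℝ)
    (hC : ∀ x ∈ Set.Icc (0 : ℝ) lammax,
      |iteratedDerivWithin ((graphOf L).dist i n) ghat (Set.Icc (0 : ℝ) lammax) x| ≤ C) :
    |gtrans χ i (kernelSig χ lam ghat) n| /
        Real.sqrt (∑ m, (gtrans χ i (kernelSig χ lam ghat) m) ^ 2) ≤
      2 * Real.sqrt N / (Nat.factorial ((graphOf L).dist i n) * |ghat 0|) *
        (lammax / 4) ^ ((graphOf L).dist i n) * C := by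
  set d := (graphOf L).dist i n
  have : NeZero N := ⟨hN.ne'⟩
  have hlammax : 0 ≤ lammax := (hlam ⟨0, hN⟩).1.trans (hlam ⟨0, hN⟩).2
  obtain ⟨p, hpd, hp⟩ :=
    exists_polynomial_natDegree_lt_abs_sub_le hlammax hd (by exact_mod_cast hsmooth) hC
  have hnum := abs_gtrans_kernelSig_apply_le horth heig hpd fun l => hp _ (hlam l)
  have hden := abs_le_sqrt_sum_sq_gtrans_kernelSig (ghat := ghat) horth ⟨0, hN⟩ hχ0 hlam0 i
  calc _ ≤ √N * (2 / d.factorial * ((lammax - 0) / 4) ^ d * C) / |ghat 0| :=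
        div_le_div₀ ((abs_nonneg _).trans hnum) hnum (abs_pos.mpr hg0) hden
    _ = _ := by rw [sub_zero]; ring

/-- Normalized decay of translated kernels: under χ₀ ≡ 1/√N, λ₀ = 0,
ĝ(0) ≠ 0, and ĝ being d_in-times continuously differentiable on [0, λ_max] with
d_in = d_G(i,n) ≥ 1, one has
|(T_i g)(n)| / ‖T_i g‖₂ ≤ (2√N / (d_in!·|ĝ(0)|)) · (λ_max/4)^{d_in} ·
  sup_{λ∈[0,λ_max]} |ĝ^{(d_in)}(λ)|. -/
theorem translated_kernel_normalized_decay
    (N : ℕ) (hN : 0 < N) (L : Matrix (Fin N) (Fin N) ℝ) (hL : L.IsSymm)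
    (χ : Fin N → Fin N → ℝ) (lam : Fin N → ℝ)
    (horth : ∀ l l' : Fin N, ∑ n, χ l n * χ l' n = if l = l' then (1 : ℝ) else 0)
    (heig : ∀ l : Fin N, L.mulVec (χ l) = lam l • χ l)
    (hχ0 : ∀ n, χ ⟨0, hN⟩ n = 1 / Real.sqrt N)
    (hlam0 : lam ⟨0, hN⟩ = 0)
    (lammax : ℝ) (hlam : ∀ l, lam l ∈ Set.Icc (0 : ℝ) lammax)
    (ghat : ℝ → ℝ) (hg0 : ghat 0 ≠ 0) (i n : Fin N)
    (hd : 1 ≤ (graphOf L).dist i n)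
    (hsmooth : ContDiffOn ℝ ((graphOf L).dist i n : ℕ∞) ghat (Set.Icc (0 : ℝ) lammax))
    (C : ℝ)
    (hC : ∀ x ∈ Set.Icc (0 : ℝ) lammax,
      |iteratedDerivWithin ((graphOf L).dist i n) ghat (Set.Icc (0 : ℝ) lammax) x| ≤ C) :
    |gtrans χ i (kernelSig χ lam ghat) n| /
        Real.sqrt (∑ m, (gtrans χ i (kernelSig χ lam ghat) m) ^ 2) ≤
      2 * Real.sqrt N / (Nat.factorial ((graphOf L).dist i n) * |ghat 0|) *
        (lammax / 4) ^ ((graphOf L).dist i n) * C :=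
  translated_kernel_normalized_decay_general N hN L χ lam horth heig hχ0 hlam0 lammax hlam ghat hg0
    i n hd hsmooth C hC
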